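/- For all integers r ≥ 2, for all n ≥ 0, the set of partitions of n with at most r−1 successive Durfee squares and whose vertical Durfee dissection property holds (A_{r,r}(n)), minus the subset A''_r(n), equals D_{r,r}(n) minus D_{r,r−1}(n); equivalently, A''_r(n) = D_{r,r−1}(n), where A''_r(n) is the union of A_{r−1,r−1}(n) with the set of partitions of n with exactly r−1 successive Durfee squares such that for at least one j, the part λ_{n_1+…+n_j} in row equal to the bottom of the j-th Durfee square strictly exceeds n_j (the size of that square). -/

import Mathlib

/-- A partition of `n`: a non-increasing list of positive integers summing to `n`. -/
def IsPartitionOf (n : ℕ) (l : List ℕ) : Prop :=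
  l.Pairwise (· ≥ ·) ∧ (∀ x ∈ l, 0 < x) ∧ l.sum = n

/-- The size of the Durfee square of a partition (given as a list of parts):
the largest `k` such that the first `k` parts are all `≥ k`. -/
def durfSq (l : List ℕ) : ℕ :=
  Nat.findGreatest (fun k => k ≤ l.length ∧ ∀ j < k, k ≤ l.getD j 0) l.length

/-- The parameter `k` of the horizontal Durfee rectangle (`k` columns, `k − 1` rows):
the largest `k` with `k − 1 ≤` the number of parts and the first `k − 1` parts all `≥ k`.
A `1 × 0` rectangle (`k = 1`) is always allowed. -/
def durfRectH (l : List ℕ) : ℕ :=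
  Nat.findGreatest (fun k => k - 1 ≤ l.length ∧ ∀ j < k - 1, k ≤ l.getD j 0) (l.length + 1)

/-- Remove `m` successive Durfee squares from the top of the partition. -/
def sqSteps : ℕ → List ℕ → List ℕ
  | 0, l => l
  | m + 1, l => sqSteps m (l.drop (durfSq l))

/-- Remove `m` successive horizontal Durfee rectangles from the top of the partition. -/
def rectSteps : ℕ → List ℕ → List ℕ
  | 0, l => l
  | m + 1, l => rectSteps m (l.drop (durfRectH l - 1))


/-!
Let `d` be the size of the Durfee square of `λ`. If its bottom row `λ_d` exceeds `d`, the
horizontal Durfee rectangle has `d` rows, so removing it is the same as removing the square.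
Otherwise `λ_d = d`, the rectangle has `d - 1` rows, and what remains is the row `d` on top of
the partition below the square; since every part below is at most `d`, the Durfee square of
that remainder is the horizontal Durfee rectangle of the part below. Induction on the number of
squares then matches "rectangle followed by `r - 2` squares" with "at most `r - 2` squares, or
`r - 1` squares one of which overhangs".
-/

/-- For a partition `λ` with successive Durfee squares of sizes `n₁, n₂, …`, the index `j` lies
in `A_λ` iff `DurfSqOverhangs (sqSteps (j - 1) λ)`. -/
def DurfSqOverhangs (l : List ℕ) : Prop :=
  durfSq l < l.getD (durfSq l - 1) 0

section DurfeeSquare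

variable {l : List ℕ}

theorem durfSq_spec (l : List ℕ) :
    durfSq l ≤ l.length ∧ ∀ j < durfSq l, durfSq l ≤ l.getD j 0 :=
  Nat.findGreatest_spec (P := fun k => k ≤ l.length ∧ ∀ j < k, k ≤ l.getD j 0)
    (Nat.zero_le _) ⟨Nat.zero_le _, by omega⟩

theorem le_durfSq {k : ℕ} (hlen : k ≤ l.length) (hk : ∀ j < k, k ≤ l.getD j 0) :
    k ≤ durfSq l :=
  Nat.le_findGreatest hlen ⟨hlen, hk⟩

theorem durfRectH_spec (l : List ℕ) :
    durfRectH l - 1 ≤ l.length ∧ ∀ j < durfRectH l - 1, durfRectH l ≤ l.getD j 0 :=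
  Nat.findGreatest_spec (P := fun k => k - 1 ≤ l.length ∧ ∀ j < k - 1, k ≤ l.getD j 0)
    (Nat.zero_le _) ⟨Nat.zero_le _, by omega⟩

theorem le_durfRectH {k : ℕ} (hlen : k - 1 ≤ l.length) (hk : ∀ j < k - 1, k ≤ l.getD j 0) :
    k ≤ durfRectH l :=
  Nat.le_findGreatest (by omega) ⟨hlen, hk⟩

theorem one_le_durfRectH (l : List ℕ) : 1 ≤ durfRectH l :=
  le_durfRectH (by simp) (by omega)

theorem getD_le_getD_of_le (hl : l.Pairwise (· ≥ ·)) {i j : ℕ} (hij : i ≤ j) :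
    l.getD j 0 ≤ l.getD i 0 := by
  rcases lt_or_ge j l.length with hj | hj
  · rw [List.getD_eq_getElem _ _ hj, List.getD_eq_getElem _ _ (by omega)]
    rcases hij.lt_or_eq with hij | rfl
    · exact List.pairwise_iff_getElem.1 hl i j (by omega) hj hij
    · rfl
  · rw [List.getD_eq_default _ _ hj]
    exact Nat.zero_le _

theorem one_le_durfSq (hne : l ≠ []) (hpos : ∀ x ∈ l, 0 < x) : 1 ≤ durfSq l := by
  have hlen : 0 < l.length := List.length_pos_iff.2 hne
  refine le_durfSq hlen fun j hj => ?_
  obtain rfl : j = 0 := by omega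
  rw [List.getD_eq_getElem _ _ hlen]
  exact hpos _ (List.getElem_mem hlen)

theorem durfSq_le_getD_pred (hne : l ≠ []) (hpos : ∀ x ∈ l, 0 < x) :
    durfSq l ≤ l.getD (durfSq l - 1) 0 :=
  (durfSq_spec l).2 _ (by have := one_le_durfSq hne hpos; omega)

/-- Maximality of the Durfee square: the first part below it has size at most `durfSq l`. -/
theorem getD_durfSq_le (hl : l.Pairwise (· ≥ ·)) : l.getD (durfSq l) 0 ≤ durfSq l := by
  rcases (durfSq_spec l).1.lt_or_eq with hlt | heq
  · have hnot : ¬ (durfSq l + 1 ≤ l.length ∧ ∀ j < durfSq l + 1, durfSq l + 1 ≤ l.getD j 0) :=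
      Nat.findGreatest_is_greatest (P := fun k => k ≤ l.length ∧ ∀ j < k, k ≤ l.getD j 0)
        (Nat.lt_succ_self _) (by omega)
    simp only [not_and, not_forall, not_le] at hnot
    obtain ⟨j, hj, hlt⟩ := hnot (by omega)
    have := getD_le_getD_of_le hl (show j ≤ durfSq l by omega)
    omega
  · rw [List.getD_eq_default _ _ heq.ge]
    exact Nat.zero_le _

theorem durfRectH_le_durfSq_succ : durfRectH l ≤ durfSq l + 1 := by
  obtain ⟨hlen, hk⟩ := durfRectH_spec l
  have := le_durfSq (l := l) (k := durfRectH l - 1) (by omega)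
    fun j hj => (hk j hj).trans' (by omega)
  omega

theorem durfSq_le_durfRectH : durfSq l ≤ durfRectH l := by
  obtain ⟨hlen, hk⟩ := durfSq_spec l
  exact le_durfRectH (by omega) fun j hj => hk j (by omega)

theorem durfRectH_eq_durfSq_succ (hl : l.Pairwise (· ≥ ·)) (hne : l ≠ [])
    (hpos : ∀ x ∈ l, 0 < x) (h : DurfSqOverhangs l) : durfRectH l = durfSq l + 1 := by
  have hd := one_le_durfSq hne hpos
  have hlen := (durfSq_spec l).1
  refine durfRectH_le_durfSq_succ.antisymm (le_durfRectH (by omega) fun j hj => ?_)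
  have := getD_le_getD_of_le hl (show j ≤ durfSq l - 1 by omega)
  exact h.trans_le this

theorem durfRectH_eq_durfSq (hne : l ≠ []) (hpos : ∀ x ∈ l, 0 < x) (h : ¬ DurfSqOverhangs l) :
    durfRectH l = durfSq l := by
  have hd := one_le_durfSq hne hpos
  refine le_antisymm ?_ durfSq_le_durfRectH
  by_contra! hlt
  have := (durfRectH_spec l).2 (durfSq l - 1) (by omega)
  exact h (by unfold DurfSqOverhangs; omega)

theorem durfRectH_le_of_getD_zero_le {x : ℕ} (hx : 1 ≤ x) (h : l.getD 0 0 ≤ x) :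
    durfRectH l ≤ x := by
  by_contra! hlt
  have := (durfRectH_spec l).2 0 (by omega)
  omega

theorem durfSq_cons_of_durfRectH_le {x : ℕ} (h : durfRectH l ≤ x) :
    durfSq (x :: l) = durfRectH l := by
  obtain ⟨hlen, hk⟩ := durfRectH_spec l
  obtain ⟨hlen', hk'⟩ := durfSq_spec (x :: l)
  have := one_le_durfRectH l
  refine le_antisymm ?_ ?_
  · refine le_durfRectH (by simp at hlen'; omega) fun j hj => ?_
    simpa using hk' (j + 1) (by omega)
  · refine le_durfSq (by simp; omega) fun j hj => ?_
    cases j with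
    | zero => simpa using h
    | succ j => simpa using hk j (by omega)

end DurfeeSquare

section SuccessiveSquares

variable {l : List ℕ}

theorem sqSteps_nil (t : ℕ) : sqSteps t [] = [] := by
  induction t with
  | zero => rfl
  | succ t ih => simpa [sqSteps] using ih

theorem sqSteps_succ_eq_nil (t : ℕ) (h : sqSteps t l = []) : sqSteps (t + 1) l = [] := by
  induction t generalizing l with
  | zero => subst h; rfl
  | succ t ih => exact ih h

theorem drop_durfRectH_of_overhangs (hl : l.Pairwise (· ≥ ·)) (hne : l ≠ [])
    (hpos : ∀ x ∈ l, 0 < x) (h : DurfSqOverhangs l) :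
    l.drop (durfRectH l - 1) = l.drop (durfSq l) := by
  rw [durfRectH_eq_durfSq_succ hl hne hpos h, Nat.add_sub_cancel]

theorem drop_durfRectH_of_not_overhangs (hne : l ≠ []) (hpos : ∀ x ∈ l, 0 < x)
    (h : ¬ DurfSqOverhangs l) :
    l.drop (durfRectH l - 1) = durfSq l :: l.drop (durfSq l) := by
  have hd := one_le_durfSq hne hpos
  have hlen := (durfSq_spec l).1
  have hrow : l[durfSq l - 1] = durfSq l := by
    have := durfSq_le_getD_pred hne hpos
    unfold DurfSqOverhangs at h
    rw [List.getD_eq_getElem _ _ (by omega)] at h this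
    omega
  rw [durfRectH_eq_durfSq hne hpos h, List.drop_eq_getElem_cons (by omega), hrow,
    Nat.sub_add_cancel hd]

theorem sqSteps_succ_cons_durfSq (hl : l.Pairwise (· ≥ ·)) (hne : l ≠ [])
    (hpos : ∀ x ∈ l, 0 < x) (t : ℕ) :
    sqSteps (t + 1) (durfSq l :: l.drop (durfSq l)) =
      sqSteps t ((l.drop (durfSq l)).drop (durfRectH (l.drop (durfSq l)) - 1)) := by
  have hrect : durfRectH (l.drop (durfSq l)) ≤ durfSq l :=
    durfRectH_le_of_getD_zero_le (one_le_durfSq hne hpos) (by simpa using getD_durfSq_le hl)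
  have := one_le_durfRectH (l.drop (durfSq l))
  rw [sqSteps, durfSq_cons_of_durfRectH_le hrect, ← Nat.sub_add_cancel this, List.drop_succ_cons,
    Nat.add_sub_cancel]

theorem sqSteps_drop_durfRectH_eq_nil_iff_of_overhangs (t : ℕ) (hl : l.Pairwise (· ≥ ·))
    (hne : l ≠ []) (hpos : ∀ x ∈ l, 0 < x) (h : DurfSqOverhangs l) :
    sqSteps t (l.drop (durfRectH l - 1)) = [] ↔
      sqSteps t l = [] ∨ sqSteps (t + 1) l = [] ∧ ∃ i < t + 1, DurfSqOverhangs (sqSteps i l) := by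
  rw [drop_durfRectH_of_overhangs hl hne hpos h]
  exact ⟨fun h0 => .inr ⟨h0, 0, t.succ_pos, h⟩,
    fun h0 => h0.elim (sqSteps_succ_eq_nil t) And.left⟩

end SuccessiveSquares

theorem sqSteps_drop_durfRectH_eq_nil_iff {l : List ℕ} (t : ℕ) (hl : l.Pairwise (· ≥ ·))
    (hpos : ∀ x ∈ l, 0 < x) :
    sqSteps t (l.drop (durfRectH l - 1)) = [] ↔
      sqSteps t l = [] ∨ sqSteps (t + 1) l = [] ∧ ∃ i < t + 1, DurfSqOverhangs (sqSteps i l) := by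
  rcases eq_or_ne l [] with rfl | hne
  · simp [sqSteps_nil]
  by_cases h : DurfSqOverhangs l
  · exact sqSteps_drop_durfRectH_eq_nil_iff_of_overhangs t hl hne hpos h
  rw [drop_durfRectH_of_not_overhangs hne hpos h]
  cases t with
  | zero => simp [sqSteps, hne, h]
  | succ t =>
    have hrest := sqSteps_drop_durfRectH_eq_nil_iff (l := l.drop (durfSq l)) t
      (hl.sublist (List.drop_sublist _ _)) fun x hx => hpos x (List.mem_of_mem_drop hx)
    rw [sqSteps_succ_cons_durfSq hl hne hpos, hrest, Nat.exists_lt_succ_left (n := t + 1)]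
    simp only [sqSteps, h, false_or]

/-- Lemma 5.3 of the paper: `𝓐''_r(n) = 𝓓_{r,r−1}(n)`. Here `𝓐''_r(n)` is the union of
`𝓐_{r−1,r−1}(n)` (partitions of `n` with at most `r−2` successive Durfee squares) with
`𝓐'_r(n)`, the set of partitions of `n` with exactly `r−1` successive Durfee squares such
that for some `j` the part `λ_{n_1+⋯+n_j}` at the bottom row of the `j`-th Durfee square
strictly exceeds the size `n_j` of that square; and `𝓓_{r,r−1}(n)` is the set of partitions
of `n` with one horizontal Durfee rectangle followed by at most `r−2` Durfee squares and
nothing below. -/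
theorem Adoubleprime_eq_D (r n : ℕ) (hr : 2 ≤ r) :
    {l : List ℕ | IsPartitionOf n l ∧
        (sqSteps (r - 2) l = [] ∨
          (sqSteps (r - 1) l = [] ∧ sqSteps (r - 2) l ≠ [] ∧
            ∃ j, 1 ≤ j ∧ j ≤ r - 1 ∧
              durfSq (sqSteps (j - 1) l) <
                (sqSteps (j - 1) l).getD (durfSq (sqSteps (j - 1) l) - 1) 0))} =
    {l : List ℕ | IsPartitionOf n l ∧
        sqSteps (r - 2) (l.drop (durfRectH l - 1)) = []} := by
  refine Set.ext fun l => and_congr_right fun hl => ?_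
  have hoverhang : (∃ j, 1 ≤ j ∧ j ≤ r - 2 + 1 ∧ DurfSqOverhangs (sqSteps (j - 1) l)) ↔
      ∃ i < r - 2 + 1, DurfSqOverhangs (sqSteps i l) :=
    ⟨fun ⟨j, hj1, hj, h⟩ => ⟨j - 1, by omega, h⟩,
      fun ⟨i, hi, h⟩ => ⟨i + 1, by omega, by omega, h⟩⟩
  rw [show r - 1 = r - 2 + 1 by omega, sqSteps_drop_durfRectH_eq_nil_iff _ hl.1 hl.2.1]
  unfold DurfSqOverhangs at hoverhang
  rw [hoverhang]
  tauto
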